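/- Let A ∈ V_0 ⊗ ⋯ ⊗ V_p be the identity matrix with respect to bases (e_i^{(j)}) of the V_j (in particular A is of boundary format). For every t ∈ ℂ, let φ_t ∈ V_0^∨ be the functional determined by φ_t(e_m^{(0)}) = t^m for m = 0, …, k_0. Then the contraction (φ_t ⊗ id)(A) ∈ V_1 ⊗ ⋯ ⊗ V_p equals (Σ_{i=0}^{k_1} t^i e_i^{(1)}) ⊗ ⋯ ⊗ (Σ_{i=0}^{k_p} t^i e_i^{(p)}). In particular each φ_t gives a strong jumping hyperplane for A, these are pairwise distinct for distinct values of t, and hence A has infinitely many distinct strong jumping hyperplanes. -/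
import Mathlib


open Module Finset

variable {p : ℕ} {V : Fin (p + 1) → Type*}
  [∀ j, AddCommGroup (V j)] [∀ j, Module ℂ (V j)] [∀ j, FiniteDimensional ℂ (V j)]

/-- `(φ, v₁, …, v_p)` is a strong jumping hyperplane for `A`: `φ ∈ (V 0)^∨` is nonzero, the
`v j` (`j ≠ 0`) are nonzero, and the contraction `(φ ⊗ id)(A)` is the decomposable tensor
`v₁ ⊗ ⋯ ⊗ v_p`. -/
def IsStrongJump (A : MultilinearMap ℂ (fun j : Fin (p + 1) => Module.Dual ℂ (V j)) ℂ)
    (φ : Module.Dual ℂ (V 0)) (v : ∀ j, V j) : Prop :=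
  φ ≠ 0 ∧ (∀ j, j ≠ 0 → v j ≠ 0) ∧
    ∀ ξ : ∀ i, Module.Dual ℂ (V i),
      A (Function.update ξ 0 φ) = ∏ j ∈ Finset.univ.erase (0 : Fin (p + 1)), ξ j (v j)

/-- The decomposable tensors `v₁ ⊗ ⋯ ⊗ v_p` and `w₁ ⊗ ⋯ ⊗ w_p` are proportional. -/
def DecProportional (v w : ∀ j, V j) : Prop :=
  ∃ c : ℂ, ∀ ξ : ∀ i, Module.Dual ℂ (V i),
    ∏ j ∈ Finset.univ.erase (0 : Fin (p + 1)), ξ j (w j) =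
      c * ∏ j ∈ Finset.univ.erase (0 : Fin (p + 1)), ξ j (v j)

private lemma sum_filter_prod {p : ℕ} (k : Fin (p + 1) → ℕ)
    (hbf : k 0 = ∑ j ∈ Finset.univ.erase (0 : Fin (p + 1)), k j)
    (f : ∀ j, Fin (k j + 1) → ℂ) :
    ∑ ind ∈ Finset.univ.filter
        (fun ind : ∀ j, Fin (k j + 1) =>
          (ind 0 : ℕ) = ∑ j ∈ Finset.univ.erase (0 : Fin (p + 1)), (ind j : ℕ)),
      ∏ j ∈ Finset.univ.erase (0 : Fin (p + 1)), f j (ind j)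
    = ∏ j ∈ Finset.univ.erase (0 : Fin (p + 1)), ∑ i, f j i := by
  rw [Finset.prod_sum]
  refine Finset.sum_nbij' (fun ind _ _ => ind _)
    (fun q a => if h : a = 0 then
        Fin.cast (show k 0 + 1 = k a + 1 by rw [h])
          (⟨∑ x ∈ (Finset.univ.erase (0 : Fin (p+1))).attach, (q x.1 x.2 : ℕ), ?_⟩ : Fin (k 0 + 1))
      else q a (Finset.mem_erase.2 ⟨h, Finset.mem_univ a⟩)) ?_ ?_ ?_ ?_ ?_
  · refine Nat.lt_succ_of_le ?_
    calc ∑ x ∈ (Finset.univ.erase (0 : Fin (p+1))).attach, (q x.1 x.2 : ℕ)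
        ≤ ∑ x ∈ (Finset.univ.erase (0 : Fin (p+1))).attach, k x.1 :=
          Finset.sum_le_sum (fun x _ => Nat.lt_succ_iff.1 (q x.1 x.2).isLt)
      _ = ∑ j ∈ Finset.univ.erase (0 : Fin (p+1)), k j := Finset.sum_attach _ _
      _ = k 0 := hbf.symm
  · intro ind _
    exact Finset.mem_pi.2 fun a ha => Finset.mem_univ _
  · intro q hq
    refine Finset.mem_filter.2 ⟨Finset.mem_univ _, ?_⟩
    beta_reduce
    rw [dif_pos rfl]
    simp only [Fin.coe_cast]
    rw [← Finset.sum_attach (Finset.univ.erase (0 : Fin (p+1)))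
      (fun j => ((if h : j = 0 then _ else q j _ : Fin (k j + 1)) : ℕ))]
    refine Finset.sum_congr rfl fun x _ => ?_
    rw [dif_neg (Finset.mem_erase.1 x.2).1]
  · intro ind hind
    funext a
    by_cases h : a = 0
    · subst h
      beta_reduce
      rw [dif_pos rfl]
      have := (Finset.mem_filter.1 hind).2
      refine Fin.ext ?_
      simp only [Fin.coe_cast]
      rw [this, ← Finset.sum_attach (Finset.univ.erase (0 : Fin (p+1)))
        (fun j => ((ind j : ℕ)))]
    · beta_reduce
      rw [dif_neg h]
  · intro q hq
    funext a ha
    beta_reduce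
    rw [dif_neg (Finset.mem_erase.1 ha).1]
  · intro ind _
    exact (Finset.prod_attach _ fun x => f x (ind x)).symm

/-- Let `A` be the identity matrix with respect to bases `e j` of the
`V j`, and for `t ∈ ℂ` let `φ t ∈ (V 0)^∨` be determined by `φ t (e 0 m) = t ^ m`.  Then the
contraction `(φ t ⊗ id)(A)` is `(∑ᵢ tⁱ e 1 i) ⊗ ⋯ ⊗ (∑ᵢ tⁱ e p i)`; each `φ t` gives a
strong jumping hyperplane, these are pairwise distinct for distinct `t`, and hence `A` has
infinitely many distinct strong jumping hyperplanes. -/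
theorem identity_has_infinitely_many_strong_jumps
    (hp : 2 ≤ p) (k : Fin (p + 1) → ℕ) (hk : ∀ j, 1 ≤ k j)
    (hdim : ∀ j, Module.finrank ℂ (V j) = k j + 1)
    (hbf : k 0 = ∑ j ∈ Finset.univ.erase (0 : Fin (p + 1)), k j)
    (e : ∀ j, Basis (Fin (k j + 1)) ℂ (V j))
    (A : MultilinearMap ℂ (fun j : Fin (p + 1) => Module.Dual ℂ (V j)) ℂ)
    (hA : ∀ ξ : ∀ i, Module.Dual ℂ (V i),
      A ξ = ∑ ind ∈ Finset.univ.filter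
          (fun ind : ∀ j, Fin (k j + 1) =>
            (ind 0 : ℕ) = ∑ j ∈ Finset.univ.erase (0 : Fin (p + 1)), (ind j : ℕ)),
        ∏ j, ξ j (e j (ind j)))
    (φ : ℂ → Module.Dual ℂ (V 0))
    (hφ : ∀ t : ℂ, φ t = (e 0).constr ℂ (fun m => t ^ (m : ℕ)))
    (v : ℂ → ∀ j, V j)
    (hv : ∀ (t : ℂ) (j : Fin (p + 1)), v t j = ∑ i : Fin (k j + 1), t ^ (i : ℕ) • e j i) :
    (∀ (t : ℂ) (ξ : ∀ i, Module.Dual ℂ (V i)),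
        A (Function.update ξ 0 (φ t)) =
          ∏ j ∈ Finset.univ.erase (0 : Fin (p + 1)), ξ j (v t j)) ∧
    (∀ t : ℂ, IsStrongJump A (φ t) (v t)) ∧
    (∀ t s : ℂ, t ≠ s → ¬ DecProportional (v t) (v s)) ∧
    (∃ F : ℕ → Module.Dual ℂ (V 0) × (∀ j, V j),
      (∀ n, IsStrongJump A (F n).1 (F n).2) ∧
      ∀ m n, m ≠ n → ¬ DecProportional (F m).2 (F n).2) := by
  -- coordinates of v t j
  have hcoord : ∀ (t : ℂ) (j) (i0 : Fin (k j + 1)), (e j).coord i0 (v t j) = t ^ (i0 : ℕ) := by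
    intro t j i0
    rw [hv]
    simp [Basis.coord_apply, Finsupp.single_apply]
  have hξv : ∀ (t : ℂ) (j) (ξj : Module.Dual ℂ (V j)),
      ξj (v t j) = ∑ i : Fin (k j + 1), t ^ (i : ℕ) * ξj (e j i) := by
    intro t j ξj
    rw [hv, map_sum]
    simp [smul_eq_mul]
  -- main contraction formula
  have main : ∀ (t : ℂ) (ξ : ∀ i, Module.Dual ℂ (V i)),
      A (Function.update ξ 0 (φ t)) =
        ∏ j ∈ Finset.univ.erase (0 : Fin (p + 1)), ξ j (v t j) := by
    intro t ξ
    rw [hA]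
    have step : ∀ ind ∈ Finset.univ.filter
          (fun ind : ∀ j, Fin (k j + 1) =>
            (ind 0 : ℕ) = ∑ j ∈ Finset.univ.erase (0 : Fin (p + 1)), (ind j : ℕ)),
        (∏ j, (Function.update ξ 0 (φ t)) j (e j (ind j))) =
          ∏ j ∈ Finset.univ.erase (0 : Fin (p + 1)),
            (t ^ (ind j : ℕ) * ξ j (e j (ind j))) := by
      intro ind hind
      have h0 : (ind 0 : ℕ) = ∑ j ∈ Finset.univ.erase (0 : Fin (p + 1)), (ind j : ℕ) :=
        (Finset.mem_filter.1 hind).2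
      rw [← Finset.mul_prod_erase Finset.univ _ (Finset.mem_univ (0 : Fin (p + 1)))]
      rw [Function.update_self, hφ, Basis.constr_basis, h0, ← Finset.prod_pow_eq_pow_sum,
        ← Finset.prod_mul_distrib]
      exact Finset.prod_congr rfl fun j hj => by
        rw [Function.update_of_ne (Finset.mem_erase.1 hj).1]
    rw [Finset.sum_congr rfl step, sum_filter_prod k hbf (fun j i => t ^ (i : ℕ) * ξ j (e j i))]
    exact Finset.prod_congr rfl fun j _ => (hξv t j (ξ j)).symm
  have jump : ∀ t : ℂ, IsStrongJump A (φ t) (v t) := by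
    intro t
    refine ⟨?_, ?_, main t⟩
    · intro h
      have : φ t (e 0 0) = 0 := by rw [h]; rfl
      rw [hφ, Basis.constr_basis] at this
      simp at this
    · intro j _ h
      have h2 := hcoord t j 0
      rw [h, map_zero] at h2
      simp at h2
  have notprop : ∀ t s : ℂ, t ≠ s → ¬ DecProportional (v t) (v s) := by
    intro t s hts ⟨c, hc⟩
    have h1ne : (1 : Fin (p + 1)) ≠ 0 := by
      simp [Fin.ext_iff, Nat.mod_eq_of_lt (by omega : 1 < p + 1)]
    -- c = 1 from ξ = coord 0
    have hc0 := hc (fun j => (e j).coord 0)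
    simp only [hcoord] at hc0
    simp at hc0
    -- idx
    have hc1 := hc (fun j => (e j).coord (if j = 1 then ⟨1, Nat.succ_lt_succ (hk j)⟩ else 0))
    simp only [hcoord] at hc1
    have evalprod : ∀ u : ℂ,
        (∏ j ∈ Finset.univ.erase (0 : Fin (p + 1)),
          u ^ (((if j = 1 then (⟨1, Nat.succ_lt_succ (hk j)⟩ : Fin (k j + 1)) else 0) : Fin (k j + 1)) : ℕ)) = u := by
      intro u
      rw [Finset.prod_eq_single (1 : Fin (p + 1))]
      · simp
      · intro j _ hj
        simp [hj]
      · intro h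
        exact absurd (Finset.mem_erase.2 ⟨h1ne, Finset.mem_univ _⟩) h
    rw [evalprod, evalprod, ← hc0, one_mul] at hc1
    exact hts hc1.symm
  refine ⟨main, jump, notprop, ⟨fun n => (φ n, v n), fun n => jump n, fun m n hmn => ?_⟩⟩
  exact notprop m n (by exact_mod_cast hmn)
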